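/- Let the hydrostatic Navier–Stokes system with free surface hold as in the context. Then for all (x,t) the energy balance holds: ∂/∂t ∫_{z_b}^{η} E dz + ∂/∂x ∫_{z_b}^{η} [ u( E + g(η−z) − (Σ_xx − Σ_zz) − ∂/∂x ∫_z^η Σ_zx dz₁ ) − w Σ_zx ] dz = − ∫_{z_b}^{η} ( ∂_x u (Σ_xx − Σ_zz) + ∂_z u Σ_xz + ∂_x w Σ_zx ) dz − (κ/c_b³) u_b², where E = u²/2 + g z. -/

import Mathlib

/-!
Multiplying the horizontal momentum equation by `u` and using incompressibility and the
hydrostatic balance gives the local conservation law `∂ₜE + ∂ₓFₓ + ∂_z F_z = -D` for the energy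
density `E = u²/2 + g z`, the fluxes `Fₓ = u (E + p - Σxx) - w Σzx`, `F_z = w (E + p - Σzz) - u Σxz`
and the dissipation `D`. Integrating over the water column with the Leibniz rule, the surface terms
cancel by the kinematic and stress-free conditions, and the bottom terms reduce to the friction
`-κ u_b² / c_b³` by the kinematic and Navier conditions. Integrating the hydrostatic balance
from `z` to `η` and using the stress-free surface gives `p = Σzz + g (η - z) - ∂ₓ ∫_z^η Σzx`,
which turns `Fₓ` into the flux of the statement.
-/

open MeasureTheory

/-- ∂/∂x of a function of (x,z,t). -/
noncomputable def dX (f : ℝ → ℝ → ℝ → ℝ) (x z t : ℝ) : ℝ := deriv (fun x' => f x' z t) x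

/-- ∂/∂z of a function of (x,z,t). -/
noncomputable def dZ (f : ℝ → ℝ → ℝ → ℝ) (x z t : ℝ) : ℝ := deriv (fun z' => f x z' t) z

/-- ∂/∂t of a function of (x,z,t). -/
noncomputable def dT (f : ℝ → ℝ → ℝ → ℝ) (x z t : ℝ) : ℝ := deriv (fun t' => f x z t') t

open Set Function intervalIntegral Metric

section PartialDerivatives

variable {f : ℝ → ℝ → ℝ} {n : WithTop ℕ∞} {x z : ℝ}

theorem DifferentiableAt.hasDerivAt_uncurry_fst (hf : DifferentiableAt ℝ (uncurry f) (x, z)) :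
    HasDerivAt (fun y => f y z) (fderiv ℝ (uncurry f) (x, z) (1, 0)) x :=
  hf.hasFDerivAt.comp_hasDerivAt (f := fun y => (y, z)) x
    ((hasDerivAt_id x).prodMk (hasDerivAt_const x z))

theorem DifferentiableAt.hasDerivAt_uncurry_snd (hf : DifferentiableAt ℝ (uncurry f) (x, z)) :
    HasDerivAt (fun y => f x y) (fderiv ℝ (uncurry f) (x, z) (0, 1)) z :=
  hf.hasFDerivAt.comp_hasDerivAt (f := fun y => (x, y)) z
    ((hasDerivAt_const z x).prodMk (hasDerivAt_id z))

theorem DifferentiableAt.hasDerivAt_uncurry_comp {a b : ℝ → ℝ} {a' b' : ℝ}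
    (hf : DifferentiableAt ℝ (uncurry f) (a x, b x)) (ha : HasDerivAt a a' x)
    (hb : HasDerivAt b b' x) :
    HasDerivAt (fun y => f (a y) (b y))
      (a' * deriv (fun y => f y (b x)) (a x) + b' * deriv (fun y => f (a x) y) (b x)) x := by
  have h := hf.hasFDerivAt.comp_hasDerivAt x (ha.prodMk hb)
  rwa [show ((a', b') : ℝ × ℝ) = a' • (1, 0) + b' • (0, 1) by simp, map_add, map_smul,
    map_smul, ← hf.hasDerivAt_uncurry_fst.deriv, ← hf.hasDerivAt_uncurry_snd.deriv] at h

theorem ContDiff.continuous_deriv_fst (hf : ContDiff ℝ n (uncurry f)) (hn : n ≠ 0) :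
    Continuous fun q : ℝ × ℝ => deriv (fun y => f y q.2) q.1 :=
  ((hf.continuous_fderiv hn).clm_apply continuous_const).congr fun _ =>
    ((hf.differentiable hn _).hasDerivAt_uncurry_fst).deriv.symm

theorem ContDiff.continuous_deriv_snd (hf : ContDiff ℝ n (uncurry f)) (hn : n ≠ 0) :
    Continuous fun q : ℝ × ℝ => deriv (fun y => f q.1 y) q.2 :=
  ((hf.continuous_fderiv hn).clm_apply continuous_const).congr fun _ =>
    ((hf.differentiable hn _).hasDerivAt_uncurry_snd).deriv.symm

theorem ContDiff.hasDerivAt_intervalIntegral (hf : ContDiff ℝ n (uncurry f)) (hn : n ≠ 0)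
    (α β x : ℝ) :
    HasDerivAt (fun y => ∫ z in α..β, f y z) (∫ z in α..β, deriv (fun y => f y z) x) x := by
  have hf' := hf.continuous_deriv_fst hn
  have hslice : ∀ y, Continuous (f y) := fun y => hf.continuous.comp (.prodMk_right y)
  obtain ⟨C, hC⟩ :=
    ((isCompact_closedBall x 1).prod isCompact_uIcc).exists_bound_of_continuousOn hf'.continuousOn
  refine (hasDerivAt_integral_of_dominated_loc_of_deriv_le (bound := fun _ => C)
    (ball_mem_nhds x one_pos) (.of_forall fun y => (hslice y).aestronglyMeasurable)
    ((hslice x).intervalIntegrable α β) (hf'.comp (.prodMk_right x)).aestronglyMeasurable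
    (.of_forall fun z hz y hy => hC (y, z) ⟨ball_subset_closedBall hy, uIoc_subset_uIcc hz⟩)
    intervalIntegrable_const
    (.of_forall fun z _ y _ =>
      (hf.differentiable hn _).hasDerivAt_uncurry_fst.differentiableAt.hasDerivAt)).2

theorem integral_eq_integral_unit_interval (φ : ℝ → ℝ) (a b : ℝ) :
    ∫ z in a..b, φ z = ∫ s in (0 : ℝ)..1, (b - a) * φ ((b - a) * s + a) := by
  rw [intervalIntegral.integral_const_mul, ← smul_eq_mul, smul_integral_comp_mul_add]
  simp

theorem integral_deriv_affine_mul_comp_affine {φ : ℝ → ℝ} (hφ : ContDiff ℝ n φ)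
    (hn : n ≠ 0) (A B a' b' : ℝ) :
    ∫ s in (0 : ℝ)..1, ((b' - a') * φ ((B - A) * s + A)
        + ((b' - a') * s + a') * ((B - A) * deriv φ ((B - A) * s + A)))
      = b' * φ B - a' * φ A := by
  have hφ' := hφ.continuous_deriv (ENat.one_le_iff_ne_zero_withTop.mpr hn)
  rw [integral_eq_sub_of_hasDerivAt (f := fun s => ((b' - a') * s + a') * φ ((B - A) * s + A))]
  · ring_nf
  · intro s _
    refine ((((hasDerivAt_id s).const_mul (b' - a')).add_const a').mul
      ((hφ.differentiable hn _).hasDerivAt.comp s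
        (((hasDerivAt_id s).const_mul (B - A)).add_const A))).congr_deriv ?_
    simp only [id, comp_apply]
    ring
  · exact (by fun_prop : Continuous _).intervalIntegrable 0 1

theorem ContDiff.hasDerivAt_intervalIntegral_leibniz (hf : ContDiff ℝ n (uncurry f))
    (hn : n ≠ 0) {a b : ℝ → ℝ} (ha : ContDiff ℝ n a) (hb : ContDiff ℝ n b) (x : ℝ) :
    HasDerivAt (fun y => ∫ z in a y..b y, f y z)
      ((∫ z in a x..b x, deriv (fun y => f y z) x) + deriv b x * f x (b x)
        - deriv a x * f x (a x)) x := by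
  -- the substitution `z = (b y - a y) * s + a y` moves the bounds into the integrand
  set F : ℝ → ℝ → ℝ := fun y s => (b y - a y) * f y ((b y - a y) * s + a y)
  have hF : ContDiff ℝ n (uncurry F) := by
    have hba : ContDiff ℝ n fun q : ℝ × ℝ => b q.1 - a q.1 :=
      (hb.comp contDiff_fst).sub (ha.comp contDiff_fst)
    exact hba.mul
      (hf.comp (contDiff_fst.prodMk ((hba.mul contDiff_snd).add (ha.comp contDiff_fst))))
  rw [show (fun y => ∫ z in a y..b y, f y z) = fun y => ∫ s in (0 : ℝ)..1, F y s from
    funext fun y => integral_eq_integral_unit_interval (f y) (a y) (b y)]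
  refine (hF.hasDerivAt_intervalIntegral hn 0 1 x).congr_deriv ?_
  set A := a x
  set B := b x
  set a' := deriv a x
  set b' := deriv b x
  set ℓ : ℝ → ℝ := fun s => (B - A) * s + A
  have hda : HasDerivAt a a' x := (ha.differentiable hn x).hasDerivAt
  have hdb : HasDerivAt b b' x := (hb.differentiable hn x).hasDerivAt
  have hdF : ∀ s, deriv (fun y => F y s) x = (B - A) * deriv (fun y => f y (ℓ s)) x
      + ((b' - a') * f x (ℓ s)
        + ((b' - a') * s + a') * ((B - A) * deriv (fun y => f x y) (ℓ s))) := by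
    intro s
    have hℓ : HasDerivAt (fun y => (b y - a y) * s + a y) ((b' - a') * s + a') x :=
      ((hdb.sub hda).mul_const s).add hda
    refine ((hdb.sub hda).mul ((hf.differentiable hn _).hasDerivAt_uncurry_comp
      (hasDerivAt_id x) hℓ)).deriv.trans ?_
    simp only [id, Pi.sub_apply, ℓ, A, B]
    ring
  have hfx : ContDiff ℝ n fun y => f x y := hf.comp (contDiff_const.prodMk contDiff_id)
  have hc₀ : Continuous fun s => f x (ℓ s) := hfx.continuous.comp (by fun_prop)
  have hc₁ : Continuous fun s => deriv (fun y => f y (ℓ s)) x :=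
    (hf.continuous_deriv_fst hn).comp (by fun_prop : Continuous fun s => (x, ℓ s))
  have hc₂ : Continuous fun s => deriv (fun y => f x y) (ℓ s) :=
    (hf.continuous_deriv_snd hn).comp (by fun_prop : Continuous fun s => (x, ℓ s))
  have hinner : ∫ z in A..B, deriv (fun y => f y z) x
      = ∫ s in (0 : ℝ)..1, (B - A) * deriv (fun y => f y (ℓ s)) x :=
    integral_eq_integral_unit_interval _ A B
  rw [integral_congr fun s _ => hdF s, intervalIntegral.integral_add,
    integral_deriv_affine_mul_comp_affine hfx hn, hinner]
  · ring
  · exact (by fun_prop : Continuous _).intervalIntegrable 0 1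
  · exact (by fun_prop : Continuous _).intervalIntegrable 0 1

end PartialDerivatives

def uncurry₃ (f : ℝ → ℝ → ℝ → ℝ) (q : ℝ × ℝ × ℝ) : ℝ := f q.1 q.2.1 q.2.2

section ThreeVariables

variable {f : ℝ → ℝ → ℝ → ℝ} {n : WithTop ℕ∞} {x z t : ℝ}

theorem ContDiff.uncurry_fix_time (hf : ContDiff ℝ n (uncurry₃ f)) (t : ℝ) :
    ContDiff ℝ n (uncurry fun x z => f x z t) :=
  hf.comp (contDiff_fst.prodMk (contDiff_snd.prodMk contDiff_const))

theorem ContDiff.uncurry_fix_space (hf : ContDiff ℝ n (uncurry₃ f)) (x : ℝ) :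
    ContDiff ℝ n (uncurry fun t z => f x z t) :=
  hf.comp (contDiff_const.prodMk (contDiff_snd.prodMk contDiff_fst))

theorem hasDerivAt_dX (hf : DifferentiableAt ℝ (uncurry₃ f) (x, z, t)) :
    HasDerivAt (fun x' => f x' z t) (dX f x z t) x :=
  (hf.comp x (f := fun x' => (x', z, t)) (by fun_prop)).hasDerivAt

theorem hasDerivAt_dZ (hf : DifferentiableAt ℝ (uncurry₃ f) (x, z, t)) :
    HasDerivAt (fun z' => f x z' t) (dZ f x z t) z :=
  (hf.comp z (f := fun z' => (x, z', t)) (by fun_prop)).hasDerivAt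

theorem hasDerivAt_dT (hf : DifferentiableAt ℝ (uncurry₃ f) (x, z, t)) :
    HasDerivAt (fun t' => f x z t') (dT f x z t) t :=
  (hf.comp t (f := fun t' => (x, z, t')) (by fun_prop)).hasDerivAt

theorem ContDiff.continuous_z (hf : ContDiff ℝ n (uncurry₃ f)) (x t : ℝ) :
    Continuous fun z => f x z t :=
  hf.continuous.comp (by fun_prop : Continuous fun z => (x, z, t))

theorem ContDiff.continuous_dX_z (hf : ContDiff ℝ n (uncurry₃ f)) (hn : n ≠ 0) (x t : ℝ) :
    Continuous fun z => dX f x z t :=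
  ((hf.uncurry_fix_time t).continuous_deriv_fst hn).comp (by fun_prop : Continuous fun z => (x, z))

theorem ContDiff.continuous_dZ_z (hf : ContDiff ℝ n (uncurry₃ f)) (hn : n ≠ 0) (x t : ℝ) :
    Continuous fun z => dZ f x z t :=
  ((hf.uncurry_fix_time t).continuous_deriv_snd hn).comp (by fun_prop : Continuous fun z => (x, z))

theorem ContDiff.continuous_dT_z (hf : ContDiff ℝ n (uncurry₃ f)) (hn : n ≠ 0) (x t : ℝ) :
    Continuous fun z => dT f x z t :=
  ((hf.uncurry_fix_space x).continuous_deriv_fst hn).comp (by fun_prop : Continuous fun z => (t, z))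

theorem ContDiff.integral_dZ (hf : ContDiff ℝ n (uncurry₃ f)) (hn : n ≠ 0) (x t a b : ℝ) :
    ∫ z in a..b, dZ f x z t = f x b t - f x a t :=
  integral_eq_sub_of_hasDerivAt (fun _ _ => hasDerivAt_dZ (hf.differentiable hn _))
    ((hf.continuous_dZ_z hn x t).intervalIntegrable a b)

theorem ContDiff.hasDerivAt_intervalIntegral_dX (hf : ContDiff ℝ n (uncurry₃ f)) (hn : n ≠ 0)
    {a b : ℝ → ℝ} (ha : ContDiff ℝ n a) (hb : ContDiff ℝ n b) (x t : ℝ) :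
    HasDerivAt (fun x' => ∫ z in a x'..b x', f x' z t)
      ((∫ z in a x..b x, dX f x z t) + deriv b x * f x (b x) t - deriv a x * f x (a x) t) x :=
  (hf.uncurry_fix_time t).hasDerivAt_intervalIntegral_leibniz hn ha hb x

theorem ContDiff.hasDerivAt_intervalIntegral_dT (hf : ContDiff ℝ n (uncurry₃ f)) (hn : n ≠ 0)
    {a b : ℝ → ℝ} (ha : ContDiff ℝ n a) (hb : ContDiff ℝ n b) (x t : ℝ) :
    HasDerivAt (fun t' => ∫ z in a t'..b t', f x z t')
      ((∫ z in a t..b t, dT f x z t) + deriv b t * f x (b t) t - deriv a t * f x (a t) t) t :=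
  (hf.uncurry_fix_space x).hasDerivAt_intervalIntegral_leibniz hn ha hb t

end ThreeVariables

section EnergyBalance

variable (g : ℝ) (u w p Sxx Sxz Szx Szz : ℝ → ℝ → ℝ → ℝ)

noncomputable def energyDensity (x z t : ℝ) : ℝ := u x z t ^ 2 / 2 + g * z

noncomputable def horizontalEnergyFlux (x z t : ℝ) : ℝ :=
  u x z t * (energyDensity g u x z t + p x z t - Sxx x z t) - w x z t * Szx x z t

noncomputable def verticalEnergyFlux (x z t : ℝ) : ℝ :=
  w x z t * (energyDensity g u x z t + p x z t - Szz x z t) - u x z t * Sxz x z t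

noncomputable def viscousDissipation (x z t : ℝ) : ℝ :=
  dX u x z t * (Sxx x z t - Szz x z t) + dZ u x z t * Sxz x z t + dX w x z t * Szx x z t

variable {g u w p Sxx Sxz Szx Szz} {n : WithTop ℕ∞}

theorem ContDiff.energyDensity (hu : ContDiff ℝ n (uncurry₃ u)) :
    ContDiff ℝ n (uncurry₃ (energyDensity g u)) :=
  ((hu.pow 2).div_const 2).add (contDiff_const.mul (contDiff_fst.comp contDiff_snd))

theorem ContDiff.horizontalEnergyFlux (hu : ContDiff ℝ n (uncurry₃ u))
    (hw : ContDiff ℝ n (uncurry₃ w)) (hp : ContDiff ℝ n (uncurry₃ p))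
    (hSxx : ContDiff ℝ n (uncurry₃ Sxx)) (hSzx : ContDiff ℝ n (uncurry₃ Szx)) :
    ContDiff ℝ n (uncurry₃ (horizontalEnergyFlux g u w p Sxx Szx)) :=
  (hu.mul ((hu.energyDensity.add hp).sub hSxx)).sub (hw.mul hSzx)

theorem ContDiff.verticalEnergyFlux (hu : ContDiff ℝ n (uncurry₃ u))
    (hw : ContDiff ℝ n (uncurry₃ w)) (hp : ContDiff ℝ n (uncurry₃ p))
    (hSxz : ContDiff ℝ n (uncurry₃ Sxz)) (hSzz : ContDiff ℝ n (uncurry₃ Szz)) :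
    ContDiff ℝ n (uncurry₃ (verticalEnergyFlux g u w p Sxz Szz)) :=
  (hw.mul ((hu.energyDensity.add hp).sub hSzz)).sub (hu.mul hSxz)

theorem local_energy_balance {x z t : ℝ} (hu : DifferentiableAt ℝ (uncurry₃ u) (x, z, t))
    (hw : DifferentiableAt ℝ (uncurry₃ w) (x, z, t))
    (hp : DifferentiableAt ℝ (uncurry₃ p) (x, z, t))
    (hSxx : DifferentiableAt ℝ (uncurry₃ Sxx) (x, z, t))
    (hSxz : DifferentiableAt ℝ (uncurry₃ Sxz) (x, z, t))
    (hSzx : DifferentiableAt ℝ (uncurry₃ Szx) (x, z, t))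
    (hSzz : DifferentiableAt ℝ (uncurry₃ Szz) (x, z, t))
    (hinc : dX u x z t + dZ w x z t = 0)
    (hmom : dT u x z t + dX (fun x' z' t' => u x' z' t' ^ 2) x z t
        + dZ (fun x' z' t' => u x' z' t' * w x' z' t') x z t + dX p x z t
      = dX Sxx x z t + dZ Sxz x z t)
    (hhyd : dZ p x z t = -g + dX Szx x z t + dZ Szz x z t) :
    dT (energyDensity g u) x z t + dX (horizontalEnergyFlux g u w p Sxx Szx) x z t
      + dZ (verticalEnergyFlux g u w p Sxz Szz) x z t
      = -viscousDissipation u w Sxx Sxz Szx Szz x z t := by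
  have hux := hasDerivAt_dX hu
  have huz := hasDerivAt_dZ hu
  have hwz := hasDerivAt_dZ hw
  have hEt : dT (energyDensity g u) x z t = u x z t * dT u x z t :=
    ((((hasDerivAt_dT hu).pow 2).div_const 2).add_const (g * z)).deriv.trans (by push_cast; ring)
  have hEx := ((hux.pow 2).div_const 2).add_const (g * z)
  have hEz := ((huz.pow 2).div_const 2).add ((hasDerivAt_id z).const_mul g)
  have hFx : dX (horizontalEnergyFlux g u w p Sxx Szx) x z t
      = dX u x z t * (energyDensity g u x z t + p x z t - Sxx x z t)
        + u x z t * (u x z t * dX u x z t + dX p x z t - dX Sxx x z t)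
        - (dX w x z t * Szx x z t + w x z t * dX Szx x z t) :=
    ((hux.mul ((hEx.add (hasDerivAt_dX hp)).sub (hasDerivAt_dX hSxx))).sub
      ((hasDerivAt_dX hw).mul (hasDerivAt_dX hSzx))).deriv.trans (by
        simp only [energyDensity, Pi.add_apply, Pi.sub_apply, Pi.pow_apply]; ring)
  have hFz : dZ (verticalEnergyFlux g u w p Sxz Szz) x z t
      = dZ w x z t * (energyDensity g u x z t + p x z t - Szz x z t)
        + w x z t * (u x z t * dZ u x z t + g + dZ p x z t - dZ Szz x z t)
        - (dZ u x z t * Sxz x z t + u x z t * dZ Sxz x z t) :=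
    ((hwz.mul ((hEz.add (hasDerivAt_dZ hp)).sub (hasDerivAt_dZ hSzz))).sub
      (huz.mul (hasDerivAt_dZ hSxz))).deriv.trans (by
        simp only [energyDensity, Pi.add_apply, Pi.sub_apply, Pi.pow_apply, id]; ring)
  have hu2 : dX (fun x' z' t' => u x' z' t' ^ 2) x z t = 2 * u x z t * dX u x z t :=
    (hux.pow 2).deriv.trans (by push_cast; ring)
  have huw : dZ (fun x' z' t' => u x' z' t' * w x' z' t') x z t
      = dZ u x z t * w x z t + u x z t * dZ w x z t :=
    (huz.mul hwz).deriv
  rw [hu2, huw] at hmom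
  rw [hEt, hFx, hFz, viscousDissipation, energyDensity]
  linear_combination u x z t * hmom + w x z t * hhyd
    + (g * z + p x z t - Szz x z t - u x z t ^ 2 / 2) * hinc

theorem integral_energy_balance (hn : n ≠ 0) (hu : ContDiff ℝ n (uncurry₃ u))
    (hw : ContDiff ℝ n (uncurry₃ w)) (hp : ContDiff ℝ n (uncurry₃ p))
    (hSxx : ContDiff ℝ n (uncurry₃ Sxx)) (hSxz : ContDiff ℝ n (uncurry₃ Sxz))
    (hSzx : ContDiff ℝ n (uncurry₃ Szx)) (hSzz : ContDiff ℝ n (uncurry₃ Szz))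
    {x t a b : ℝ} (hab : a ≤ b) (hinc : ∀ z ∈ Icc a b, dX u x z t + dZ w x z t = 0)
    (hmom : ∀ z ∈ Icc a b, dT u x z t + dX (fun x' z' t' => u x' z' t' ^ 2) x z t
        + dZ (fun x' z' t' => u x' z' t' * w x' z' t') x z t + dX p x z t
      = dX Sxx x z t + dZ Sxz x z t)
    (hhyd : ∀ z ∈ Icc a b, dZ p x z t = -g + dX Szx x z t + dZ Szz x z t) :
    (∫ z in a..b, dT (energyDensity g u) x z t)
        + ∫ z in a..b, dX (horizontalEnergyFlux g u w p Sxx Szx) x z t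
      = -(∫ z in a..b, viscousDissipation u w Sxx Sxz Szx Szz x z t)
        - (verticalEnergyFlux g u w p Sxz Szz x b t
          - verticalEnergyFlux g u w p Sxz Szz x a t) := by
  have hFz := hu.verticalEnergyFlux hw hp hSxz hSzz (g := g)
  have hD : Continuous fun z => viscousDissipation u w Sxx Sxz Szx Szz x z t := by
    have := hu.continuous_dX_z hn x t
    have := hu.continuous_dZ_z hn x t
    have := hw.continuous_dX_z hn x t
    have := hSxx.continuous_z x t
    have := hSxz.continuous_z x t
    have := hSzx.continuous_z x t
    have := hSzz.continuous_z x t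
    unfold viscousDissipation
    fun_prop
  have hlocal : ∫ z in a..b, (dT (energyDensity g u) x z t
        + dX (horizontalEnergyFlux g u w p Sxx Szx) x z t)
      = ∫ z in a..b, (-viscousDissipation u w Sxx Sxz Szx Szz x z t
        - dZ (verticalEnergyFlux g u w p Sxz Szz) x z t) := by
    refine integral_congr fun z hz => ?_
    rw [uIcc_of_le hab] at hz
    have d := fun {f : ℝ → ℝ → ℝ → ℝ} (hf : ContDiff ℝ n (uncurry₃ f)) =>
      hf.differentiable hn (x, z, t)
    linear_combination local_energy_balance (d hu) (d hw) (d hp) (d hSxx) (d hSxz) (d hSzx) (d hSzz)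
      (hinc z hz) (hmom z hz) (hhyd z hz)
  rw [← intervalIntegral.integral_add, hlocal, intervalIntegral.integral_sub,
    intervalIntegral.integral_neg, hFz.integral_dZ hn]
  · exact hD.neg.intervalIntegrable a b
  · exact (hFz.continuous_dZ_z hn x t).intervalIntegrable a b
  · exact (hu.energyDensity.continuous_dT_z hn x t).intervalIntegrable a b
  · exact ((hu.horizontalEnergyFlux hw hp hSxx hSzx).continuous_dX_z hn x t).intervalIntegrable a b

theorem pressure_eq_of_hydrostatic (hn : n ≠ 0) (hp : ContDiff ℝ n (uncurry₃ p))
    (hSzx : ContDiff ℝ n (uncurry₃ Szx)) (hSzz : ContDiff ℝ n (uncurry₃ Szz))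
    {η : ℝ → ℝ} (hη : ContDiff ℝ n η) {x z t : ℝ} (hz : z ≤ η x)
    (hhyd : ∀ z' ∈ Icc z (η x), dZ p x z' t = -g + dX Szx x z' t + dZ Szz x z' t)
    (hdyn : (Szx x (η x) t * -deriv η x + (-p x (η x) t + Szz x (η x) t))
      / √(1 + deriv η x ^ 2) = 0) :
    p x z t = Szz x z t + g * (η x - z) - deriv (fun x' => ∫ z' in z..η x', Szx x' z' t) x := by
  have hsurface := (div_eq_zero_iff.mp hdyn).resolve_right (by positivity)
  have hleibniz := (hSzx.hasDerivAt_intervalIntegral_dX hn (contDiff_const (c := z)) hη x t).deriv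
  rw [deriv_const, zero_mul, sub_zero] at hleibniz
  have hcolumn : ∫ z' in z..η x, dZ p x z' t
      = ∫ z' in z..η x, (-g + dX Szx x z' t + dZ Szz x z' t) := by
    refine integral_congr fun z' hz' => hhyd z' ?_
    rwa [uIcc_of_le hz] at hz'
  rw [intervalIntegral.integral_add, intervalIntegral.integral_add, intervalIntegral.integral_const,
    hp.integral_dZ hn, hSzz.integral_dZ hn, smul_eq_mul] at hcolumn
  · linear_combination hleibniz - hcolumn - hsurface
  · exact intervalIntegrable_const
  · exact (hSzx.continuous_dX_z hn x t).intervalIntegrable _ _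
  · exact intervalIntegrable_const.add ((hSzx.continuous_dX_z hn x t).intervalIntegrable _ _)
  · exact (hSzz.continuous_dZ_z hn x t).intervalIntegrable _ _

theorem surface_energy_flux_eq_zero {x z t ηt ηx : ℝ} (hkin : ηt + u x z t * ηx - w x z t = 0)
    (hdyn : ((-p x z t + Sxx x z t) * -ηx + Sxz x z t) / √(1 + ηx ^ 2) = 0
      ∧ (Szx x z t * -ηx + (-p x z t + Szz x z t)) / √(1 + ηx ^ 2) = 0) :
    ηt * energyDensity g u x z t + ηx * horizontalEnergyFlux g u w p Sxx Szx x z t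
      - verticalEnergyFlux g u w p Sxz Szz x z t = 0 := by
  have h₁ := (div_eq_zero_iff.mp hdyn.1).resolve_right (by positivity)
  have h₂ := (div_eq_zero_iff.mp hdyn.2).resolve_right (by positivity)
  unfold horizontalEnergyFlux verticalEnergyFlux
  linear_combination energyDensity g u x z t * hkin + u x z t * h₁ + w x z t * h₂

theorem bottom_energy_flux_eq {κ c s zx x z t : ℝ} (hc : c ≠ 0) (hs : s = c * zx)
    (hkin : u x z t * zx - w x z t = 0)
    (hdyn : c * ((-p x z t + Sxx x z t) * -s + Sxz x z t * c)
        + s * (Szx x z t * -s + (-p x z t + Szz x z t) * c) = κ / c * u x z t) :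
    verticalEnergyFlux g u w p Sxz Szz x z t - zx * horizontalEnergyFlux g u w p Sxx Szx x z t
      = -(κ / c ^ 3 * u x z t ^ 2) := by
  -- the pressure drops out of the tangential stress
  have htangential : Sxz x z t - zx * Sxx x z t + zx * Szz x z t - zx ^ 2 * Szx x z t
      = κ / c ^ 3 * u x z t := by
    rw [hs] at hdyn
    field_simp at hdyn ⊢
    linear_combination hdyn
  unfold horizontalEnergyFlux verticalEnergyFlux
  linear_combination (-(energyDensity g u x z t + p x z t + zx * Szx x z t - Szz x z t)) * hkin
    - u x z t * htangential

end EnergyBalance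

theorem stmt0 (g κ : ℝ)
    (zb : ℝ → ℝ) (H : ℝ → ℝ → ℝ)
    (hzb : ContDiff ℝ (⊤ : ℕ∞) zb)
    (hH : ContDiff ℝ (⊤ : ℕ∞) (fun q : ℝ × ℝ => H q.1 q.2))
    (hHpos : ∀ x t : ℝ, 0 < H x t)
    (η : ℝ → ℝ → ℝ) (hη : ∀ x t : ℝ, η x t = zb x + H x t)
    (u w p Sxx Sxz Szx Szz : ℝ → ℝ → ℝ → ℝ)
    (hu : ContDiff ℝ (⊤ : ℕ∞) (fun q : ℝ × ℝ × ℝ => u q.1 q.2.1 q.2.2))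
    (hw : ContDiff ℝ (⊤ : ℕ∞) (fun q : ℝ × ℝ × ℝ => w q.1 q.2.1 q.2.2))
    (hp : ContDiff ℝ (⊤ : ℕ∞) (fun q : ℝ × ℝ × ℝ => p q.1 q.2.1 q.2.2))
    (hSxx : ContDiff ℝ (⊤ : ℕ∞) (fun q : ℝ × ℝ × ℝ => Sxx q.1 q.2.1 q.2.2))
    (hSxz : ContDiff ℝ (⊤ : ℕ∞) (fun q : ℝ × ℝ × ℝ => Sxz q.1 q.2.1 q.2.2))
    (hSzx : ContDiff ℝ (⊤ : ℕ∞) (fun q : ℝ × ℝ × ℝ => Szx q.1 q.2.1 q.2.2))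
    (hSzz : ContDiff ℝ (⊤ : ℕ∞) (fun q : ℝ × ℝ × ℝ => Szz q.1 q.2.1 q.2.2))
    -- incompressibility
    (hincomp : ∀ x t : ℝ, ∀ z ∈ Set.Icc (zb x) (η x t),
      dX u x z t + dZ w x z t = 0)
    -- horizontal momentum
    (hmom : ∀ x t : ℝ, ∀ z ∈ Set.Icc (zb x) (η x t),
      dT u x z t + dX (fun x' z' t' => (u x' z' t') ^ 2) x z t
        + dZ (fun x' z' t' => u x' z' t' * w x' z' t') x z t + dX p x z t
      = dX Sxx x z t + dZ Sxz x z t)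
    -- hydrostatic vertical balance
    (hhyd : ∀ x t : ℝ, ∀ z ∈ Set.Icc (zb x) (η x t),
      dZ p x z t = -g + dX Szx x z t + dZ Szz x z t)
    -- kinematic boundary conditions
    (hkin_s : ∀ x t : ℝ,
      deriv (fun t' => η x t') t
        + u x (η x t) t * deriv (fun x' => η x' t) x - w x (η x t) t = 0)
    (hkin_b : ∀ x t : ℝ, u x (zb x) t * deriv zb x - w x (zb x) t = 0)
    -- dynamic boundary condition at the free surface: (−pI + Σ) n_s = 0
    (hdyn_s : ∀ x t : ℝ,
      ((-(p x (η x t) t) + Sxx x (η x t) t) * (-(deriv (fun x' => η x' t) x))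
          + Sxz x (η x t) t) / Real.sqrt (1 + (deriv (fun x' => η x' t) x) ^ 2) = 0
      ∧ (Szx x (η x t) t * (-(deriv (fun x' => η x' t) x))
          + (-(p x (η x t) t) + Szz x (η x t) t))
          / Real.sqrt (1 + (deriv (fun x' => η x' t) x) ^ 2) = 0)
    -- friction boundary condition at the bottom: t_b · (−pI + Σ) n_b = (κ/c_b) u_b
    (cb sb : ℝ → ℝ)
    (hcb : ∀ x : ℝ, cb x = 1 / Real.sqrt (1 + (deriv zb x) ^ 2))
    (hsb : ∀ x : ℝ, sb x = cb x * deriv zb x)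
    (hdyn_b : ∀ x t : ℝ,
      cb x * ((-(p x (zb x) t) + Sxx x (zb x) t) * (-(sb x)) + Sxz x (zb x) t * cb x)
        + sb x * (Szx x (zb x) t * (-(sb x)) + (-(p x (zb x) t) + Szz x (zb x) t) * cb x)
      = (κ / cb x) * u x (zb x) t) :
    ∀ x t : ℝ,
      deriv (fun t' => ∫ z in (zb x)..(η x t'), ((u x z t') ^ 2 / 2 + g * z)) t
        + deriv (fun x' => ∫ z in (zb x')..(η x' t),
            (u x' z t * (((u x' z t) ^ 2 / 2 + g * z) + g * (η x' t - z)
                - (Sxx x' z t - Szz x' z t)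
                - deriv (fun x'' => ∫ z₁ in z..(η x'' t), Szx x'' z₁ t) x')
              - w x' z t * Szx x' z t)) x
      = -(∫ z in (zb x)..(η x t),
            (dX u x z t * (Sxx x z t - Szz x z t) + dZ u x z t * Sxz x z t
              + dX w x z t * Szx x z t))
        - κ / (cb x) ^ 3 * (u x (zb x) t) ^ 2 := by
  intro x t
  have hn : ((⊤ : ℕ∞) : WithTop ℕ∞) ≠ 0 := by simp
  have hle : ∀ x' t', zb x' ≤ η x' t' := fun x' t' => by linarith [hη x' t', hHpos x' t']
  have hηC : ContDiff ℝ (⊤ : ℕ∞) (uncurry η) := by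
    rw [show uncurry η = fun q => zb q.1 + H q.1 q.2 from funext fun q => hη q.1 q.2]
    exact (hzb.comp contDiff_fst).add hH
  have hηx : ContDiff ℝ (⊤ : ℕ∞) fun x' => η x' t :=
    hηC.comp (contDiff_id.prodMk contDiff_const)
  have hηt : ContDiff ℝ (⊤ : ℕ∞) fun t' => η x t' :=
    hηC.comp (contDiff_const.prodMk contDiff_id)
  have hflux : (fun x' => ∫ z in (zb x')..(η x' t),
      (u x' z t * (((u x' z t) ^ 2 / 2 + g * z) + g * (η x' t - z)
          - (Sxx x' z t - Szz x' z t)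
          - deriv (fun x'' => ∫ z₁ in z..(η x'' t), Szx x'' z₁ t) x')
        - w x' z t * Szx x' z t))
      = fun x' => ∫ z in zb x'..η x' t, horizontalEnergyFlux g u w p Sxx Szx x' z t := by
    funext x'
    refine integral_congr fun z hz => ?_
    rw [uIcc_of_le (hle x' t)] at hz
    rw [horizontalEnergyFlux, pressure_eq_of_hydrostatic hn hp hSzx hSzz hηx hz.2
      (fun z' hz' => hhyd x' t z' ⟨hz.1.trans hz'.1, hz'.2⟩) (hdyn_s x' t).2, energyDensity]
    ring
  change deriv (fun t' => ∫ z in zb x..η x t', energyDensity g u x z t') t + _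
    = -(∫ z in zb x..η x t, viscousDissipation u w Sxx Sxz Szx Szz x z t) - _
  rw [hflux, (hu.energyDensity.hasDerivAt_intervalIntegral_dT hn contDiff_const hηt x t).deriv,
    ((hu.horizontalEnergyFlux hw hp hSxx hSzx).hasDerivAt_intervalIntegral_dX hn hzb hηx x
      t).deriv,
    deriv_const]
  have hcb0 : cb x ≠ 0 := by rw [hcb x]; positivity
  linear_combination
    integral_energy_balance hn hu hw hp hSxx hSxz hSzx hSzz (hle x t) (hincomp x t) (hmom x t)
      (hhyd x t)
    + surface_energy_flux_eq_zero (hkin_s x t) (hdyn_s x t)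
    + bottom_energy_flux_eq hcb0 (hsb x) (hkin_b x t) (hdyn_b x t)
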